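/- arXiv:2604.22949 — 5 statements merged into one kernel-verified Lean document; each statement's English description precedes it below -/
import Mathlib

section
/- Let R = ℤ[b₂,b₃,b₄,b₈]/(4b₈ + b₄² − b₂b₃²). The subring S of R generated by 2b₂, b₃, b₄, b₂², b₂b₃, b₂b₄, and b₈ has the property that the quotient abelian group R/S is an 𝔽₂-vector space with basis given by the images of the monomials b₂^{2m+1} b₈^n for m, n ≥ 0. -/
open MvPolynomial

noncomputable def jFIdeal : Ideal (MvPolynomial (Fin 4) ℤ) :=
  Ideal.span {4 * X 3 + (X 2) ^ 2 - X 0 * (X 1) ^ 2}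

noncomputable abbrev jF : Type := MvPolynomial (Fin 4) ℤ ⧸ jFIdeal

noncomputable def b2 : jF := Ideal.Quotient.mk jFIdeal (X 0)
noncomputable def b3 : jF := Ideal.Quotient.mk jFIdeal (X 1)
noncomputable def b4 : jF := Ideal.Quotient.mk jFIdeal (X 2)
noncomputable def b8 : jF := Ideal.Quotient.mk jFIdeal (X 3)

/-- The subring of `jF` generated by `2b₂, b₃, b₄, b₂², b₂b₃, b₂b₄, b₈`. -/
noncomputable def S : Subring jF :=
  Subring.closure {2 * b2, b3, b4, b2 ^ 2, b2 * b3, b2 * b4, b8}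

namespace JFAux

lemma b3_mem : b3 ∈ S := Subring.subset_closure (by simp)
lemma b4_mem : b4 ∈ S := Subring.subset_closure (by simp)
lemma b8_mem : b8 ∈ S := Subring.subset_closure (by simp)
lemma two_b2_mem : (2 * b2 : jF) ∈ S := Subring.subset_closure (by simp)
lemma b2sq_mem : (b2 ^ 2 : jF) ∈ S := Subring.subset_closure (by simp)
lemma b2b3_mem : (b2 * b3 : jF) ∈ S := Subring.subset_closure (by simp)
lemma b2b4_mem : (b2 * b4 : jF) ∈ S := Subring.subset_closure (by simp)

lemma mem_mon (a b c d : ℕ) (h : a % 2 = 0 ∨ 0 < b ∨ 0 < c) :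
    b2 ^ a * b3 ^ b * b4 ^ c * b8 ^ d ∈ S := by
  rcases Nat.even_or_odd a with ⟨k, hk⟩ | ⟨k, hk⟩
  · have ha : b2 ^ a = (b2 ^ 2) ^ k := by rw [hk, ← two_mul, pow_mul]
    rw [ha]
    exact mul_mem (mul_mem (mul_mem (pow_mem b2sq_mem k) (pow_mem b3_mem b))
      (pow_mem b4_mem c)) (pow_mem b8_mem d)
  · have h' : 0 < b ∨ 0 < c := by omega
    rcases h' with hb | hc
    · obtain ⟨b', rfl⟩ := Nat.exists_eq_succ_of_ne_zero hb.ne'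
      have he : b2 ^ a * b3 ^ (b' + 1) * b4 ^ c * b8 ^ d =
          (b2 ^ 2) ^ k * (b2 * b3) * b3 ^ b' * b4 ^ c * b8 ^ d := by
        rw [hk, pow_add, pow_mul, pow_one, pow_succ]; ring
      rw [he]
      exact mul_mem (mul_mem (mul_mem (mul_mem (pow_mem b2sq_mem k) b2b3_mem)
        (pow_mem b3_mem b')) (pow_mem b4_mem c)) (pow_mem b8_mem d)
    · obtain ⟨c', rfl⟩ := Nat.exists_eq_succ_of_ne_zero hc.ne'
      have he : b2 ^ a * b3 ^ b * b4 ^ (c' + 1) * b8 ^ d =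
          (b2 ^ 2) ^ k * (b2 * b4) * b3 ^ b * b4 ^ c' * b8 ^ d := by
        rw [hk, pow_add, pow_mul, pow_one, pow_succ]; ring
      rw [he]
      exact mul_mem (mul_mem (mul_mem (mul_mem (pow_mem b2sq_mem k) b2b4_mem)
        (pow_mem b3_mem b)) (pow_mem b4_mem c')) (pow_mem b8_mem d)

lemma two_mem : (2 : jF) ∈ S := by
  rw [show (2 : jF) = 1 + 1 by norm_num]
  exact add_mem S.one_mem S.one_mem

lemma two_mul_mem_mon (a b c d : ℕ) :
    (2 : jF) * (b2 ^ a * b3 ^ b * b4 ^ c * b8 ^ d) ∈ S := by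
  rcases Nat.even_or_odd a with ⟨k, hk⟩ | ⟨k, hk⟩
  · exact mul_mem two_mem (mem_mon a b c d (Or.inl (by omega)))
  · have he : (2 : jF) * (b2 ^ a * b3 ^ b * b4 ^ c * b8 ^ d) =
        (2 * b2) * ((b2 ^ 2) ^ k * b3 ^ b * b4 ^ c * b8 ^ d) := by
      rw [hk, pow_add, pow_mul, pow_one]; ring
    rw [he]
    exact mul_mem two_b2_mem (mul_mem (mul_mem (mul_mem (pow_mem b2sq_mem k)
      (pow_mem b3_mem b)) (pow_mem b4_mem c)) (pow_mem b8_mem d))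

lemma mk_monomial (m : Fin 4 →₀ ℕ) (r : ℤ) :
    Ideal.Quotient.mk jFIdeal (monomial m r) =
      r • (b2 ^ m 0 * b3 ^ m 1 * b4 ^ m 2 * b8 ^ m 3) := by
  rw [monomial_eq, Finsupp.prod_fintype _ _ fun i => pow_zero _, Fin.prod_univ_four]
  have hC : (C r : MvPolynomial (Fin 4) ℤ) = (r : MvPolynomial (Fin 4) ℤ) := by
    simp
  rw [hC]
  simp only [map_mul, map_pow, map_intCast]
  rw [zsmul_eq_mul]
  rfl

/-- linear combination map sending `f` to `∑ f p • b2^(2p₁+1) b8^p₂`. -/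
noncomputable def T : ((ℕ × ℕ) →₀ ℤ) →ₗ[ℤ] jF :=
  Finsupp.linearCombination ℤ fun p : ℕ × ℕ => b2 ^ (2 * p.1 + 1) * b8 ^ p.2

noncomputable def G : AddSubgroup jF where
  carrier := {x | ∃ f : (ℕ × ℕ) →₀ ℤ, x - T f ∈ S.toAddSubgroup}
  zero_mem' := ⟨0, by simp⟩
  add_mem' := by
    rintro x y ⟨f, hf⟩ ⟨g, hg⟩
    refine ⟨f + g, ?_⟩
    rw [map_add]
    have : x + y - (T f + T g) = (x - T f) + (y - T g) := by ring
    rw [this]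
    exact add_mem hf hg
  neg_mem' := by
    rintro x ⟨f, hf⟩
    refine ⟨-f, ?_⟩
    rw [map_neg]
    have : -x - -(T f) = -(x - T f) := by ring
    rw [this]
    exact neg_mem hf

lemma mon_mem_G (m : Fin 4 →₀ ℕ) (r : ℤ) :
    Ideal.Quotient.mk jFIdeal (monomial m r) ∈ G := by
  rw [mk_monomial]
  by_cases h : m 0 % 2 = 1 ∧ m 1 = 0 ∧ m 2 = 0
  · obtain ⟨h1, h2, h3⟩ := h
    obtain ⟨k, hk⟩ : ∃ k, m 0 = 2 * k + 1 := ⟨m 0 / 2, by omega⟩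
    refine ⟨Finsupp.single (k, m 3) r, ?_⟩
    have hT : T (Finsupp.single (k, m 3) r) = r • (b2 ^ (2 * k + 1) * b8 ^ m 3) := by
      simp [T]
    rw [hT, hk, h2, h3]
    simp
  · refine ⟨0, ?_⟩
    rw [show T 0 = 0 from T.map_zero, sub_zero]
    exact AddSubgroup.zsmul_mem _ (mem_mon _ _ _ _ (by omega)) r

lemma all_mem_G (x : jF) : x ∈ G := by
  obtain ⟨q, rfl⟩ := Ideal.Quotient.mk_surjective x
  rw [q.as_sum, map_sum]
  exact AddSubgroup.sum_mem _ fun m _ => mon_mem_G m _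

-- Part 3 machinery

noncomputable def ψ : MvPolynomial (Fin 4) ℤ →+* MvPolynomial (Fin 4) (ZMod 2) :=
  eval₂Hom ((C : ZMod 2 →+* _).comp (Int.castRingHom (ZMod 2))) ![X 0, 0, 0, X 3]

lemma ψ_rel : ψ (4 * X 3 + (X 2) ^ 2 - X 0 * (X 1) ^ 2) = 0 := by
  have h4 : (4 : MvPolynomial (Fin 4) (ZMod 2)) = 0 := by
    rw [← map_ofNat (C : ZMod 2 →+* MvPolynomial (Fin 4) (ZMod 2)) 4,
      show (4 : ZMod 2) = 0 by decide, map_zero]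
  have hx0 : ψ (X 0) = X 0 := by simp [ψ]
  have hx1 : ψ (X 1) = 0 := by simp [ψ]
  have hx2 : ψ (X 2) = 0 := by simp [ψ]
  have hx3 : ψ (X 3) = X 3 := by simp [ψ]
  rw [map_sub, map_add, map_mul, map_pow, map_mul, map_pow, hx0, hx1, hx2, hx3,
    map_ofNat, h4]
  ring

lemma ψ_vanish : ∀ a ∈ jFIdeal, ψ a = 0 := by
  have hle : jFIdeal ≤ RingHom.ker ψ := by
    rw [jFIdeal, Ideal.span_le, Set.singleton_subset_iff]
    simpa [RingHom.mem_ker] using ψ_rel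
  intro a ha
  exact RingHom.mem_ker.mp (hle ha)

noncomputable def φ : jF →+* MvPolynomial (Fin 4) (ZMod 2) :=
  Ideal.Quotient.lift jFIdeal ψ ψ_vanish

lemma φ_b2 : φ b2 = X 0 := by simp [φ, b2, ψ]
lemma φ_b3 : φ b3 = 0 := by simp [φ, b3, ψ]
lemma φ_b4 : φ b4 = 0 := by simp [φ, b4, ψ]
lemma φ_b8 : φ b8 = X 3 := by simp [φ, b8, ψ]

noncomputable def P : Subring (MvPolynomial (Fin 4) (ZMod 2)) where
  carrier := {x | ∀ m : Fin 4 →₀ ℕ, m 0 % 2 = 1 → coeff m x = 0}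
  zero_mem' := by intro m _; simp
  one_mem' := by
    intro m hm
    rw [coeff_one]
    have : (0 : Fin 4 →₀ ℕ) ≠ m := by
      intro h; rw [← h] at hm; simp at hm
    simp [this]
  add_mem' := by
    intro x y hx hy m hm
    rw [coeff_add, hx m hm, hy m hm, add_zero]
  neg_mem' := by
    intro x hx m hm
    rw [coeff_neg, hx m hm, neg_zero]
  mul_mem' := by
    intro x y hx hy m hm
    rw [coeff_mul]
    refine Finset.sum_eq_zero fun p hp => ?_
    rw [Finset.HasAntidiagonal.mem_antidiagonal] at hp
    have h0 : p.1 0 + p.2 0 = m 0 := by rw [← hp]; rfl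
    rcases Nat.even_or_odd (p.1 0) with h | h
    · have h2 : p.2 0 % 2 = 1 := by
        rw [Nat.even_iff] at h; omega
      rw [hy _ h2, mul_zero]
    · rw [hx _ (Nat.odd_iff.mp h), zero_mul]

lemma hSP {x : jF} (hx : x ∈ S) : φ x ∈ P := by
  have hle : S ≤ P.comap φ := by
    rw [S]
    refine Subring.closure_le.mpr ?_
    rintro y hy
    simp only [Set.mem_insert_iff, Set.mem_singleton_iff] at hy
    have h2 : ((2 : jF) : jF) = (2 : jF) := rfl
    rcases hy with rfl | rfl | rfl | rfl | rfl | rfl | rfl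
    · have : φ (2 * b2) = 0 := by
        rw [map_mul, φ_b2]
        have : φ (2 : jF) = (2 : MvPolynomial (Fin 4) (ZMod 2)) := by
          rw [map_ofNat]
        rw [this]
        have h4 : (2 : MvPolynomial (Fin 4) (ZMod 2)) = 0 := by
          have := map_ofNat (C : ZMod 2 →+* MvPolynomial (Fin 4) (ZMod 2)) 2
          rw [← this, show ((2 : ZMod 2) : ZMod 2) = 0 by decide, map_zero]
        rw [h4, zero_mul]
      exact Subring.mem_comap.mpr (by rw [this]; exact zero_mem _)
    · exact Subring.mem_comap.mpr (by rw [φ_b3]; exact zero_mem _)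
    · exact Subring.mem_comap.mpr (by rw [φ_b4]; exact zero_mem _)
    · refine Subring.mem_comap.mpr ?_
      rw [map_pow, φ_b2]
      intro m hm
      rw [coeff_X_pow]
      have : ¬ Finsupp.single (0 : Fin 4) 2 = m := by
        intro h
        have := DFunLike.congr_fun h (0 : Fin 4)
        simp [Finsupp.single_apply] at this
        omega
      simp [this]
    · exact Subring.mem_comap.mpr (by rw [map_mul, φ_b3, mul_zero]; exact zero_mem _)
    · exact Subring.mem_comap.mpr (by rw [map_mul, φ_b4, mul_zero]; exact zero_mem _)
    · refine Subring.mem_comap.mpr ?_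
      rw [φ_b8]
      intro m hm
      have hX : (X 3 : MvPolynomial (Fin 4) (ZMod 2)) = X 3 ^ 1 := (pow_one _).symm
      rw [hX, coeff_X_pow]
      have : ¬ Finsupp.single (3 : Fin 4) 1 = m := by
        intro h
        have := DFunLike.congr_fun h (0 : Fin 4)
        simp [Finsupp.single_apply] at this
        omega
      simp [this]
  exact hle hx

end JFAux

open JFAux

/-- The quotient abelian group `jF/S` is an `𝔽₂`-vector space with basis the images of
the monomials `b₂^(2m+1) b₈^n`, `m, n ≥ 0`:
(1) every element of the quotient is killed by `2`;
(2) the monomials `b₂^(2m+1) b₈^n` span `jF` over `S` (with `ℤ` coefficients, which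
    suffices by (1));
(3) the images of these monomials are linearly independent over `𝔽₂`, i.e. no nonempty
    finite sum of distinct such monomials lies in `S`. -/

theorem stmt0 :
    (∀ x : jF, (2 : ℤ) • x ∈ S.toAddSubgroup) ∧
    (∀ x : jF, ∃ (F : Finset (ℕ × ℕ)) (c : ℕ × ℕ → ℤ),
      x - ∑ p ∈ F, c p • (b2 ^ (2 * p.1 + 1) * b8 ^ p.2) ∈ S.toAddSubgroup) ∧
    (∀ F : Finset (ℕ × ℕ),
      (∑ p ∈ F, b2 ^ (2 * p.1 + 1) * b8 ^ p.2) ∈ S.toAddSubgroup → F = ∅) := by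
  refine ⟨?_, ?_, ?_⟩
  · -- (1)
    intro x
    obtain ⟨q, rfl⟩ := Ideal.Quotient.mk_surjective x
    rw [q.as_sum, map_sum, Finset.smul_sum]
    refine AddSubgroup.sum_mem _ fun m _ => ?_
    rw [mk_monomial, smul_comm]
    refine AddSubgroup.zsmul_mem _ ?_ _
    show (2 : ℤ) • _ ∈ S
    rw [zsmul_eq_mul]
    push_cast
    exact two_mul_mem_mon _ _ _ _
  · -- (2)
    intro x
    obtain ⟨f, hf⟩ := all_mem_G x
    refine ⟨f.support, f, ?_⟩
    have : T f = ∑ p ∈ f.support, f p • (b2 ^ (2 * p.1 + 1) * b8 ^ p.2) := by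
      rw [T, Finsupp.linearCombination_apply, Finsupp.sum]
    rwa [← this]
  · -- (3)
    intro F hF
    by_contra hne
    obtain ⟨p0, hp0⟩ := Finset.nonempty_iff_ne_empty.mpr hne
    have h1 := hSP hF
    rw [map_sum] at h1
    have h2 : ∀ p : ℕ × ℕ, φ (b2 ^ (2 * p.1 + 1) * b8 ^ p.2) =
        X 0 ^ (2 * p.1 + 1) * X 3 ^ p.2 := by
      intro p
      rw [map_mul, map_pow, map_pow, φ_b2, φ_b8]
    simp only [h2] at h1
    set m0 : Fin 4 →₀ ℕ := Finsupp.single 0 (2 * p0.1 + 1) + Finsupp.single 3 p0.2 with hm0def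
    have hm0 : m0 0 % 2 = 1 := by
      simp [hm0def, Finsupp.single_apply]
    have hz := h1 m0 hm0
    have hmon : ∀ p : ℕ × ℕ, (X 0 ^ (2 * p.1 + 1) * X 3 ^ p.2 : MvPolynomial (Fin 4) (ZMod 2)) =
        monomial (Finsupp.single 0 (2 * p.1 + 1) + Finsupp.single 3 p.2) 1 := by
      intro p
      rw [X_pow_eq_monomial, X_pow_eq_monomial, monomial_mul, one_mul]
    rw [MvPolynomial.coeff_sum] at hz
    simp only [hmon, coeff_monomial] at hz
    have hinj : ∀ p : ℕ × ℕ, p ≠ p0 →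
        ¬ (Finsupp.single (0 : Fin 4) (2 * p.1 + 1) + Finsupp.single 3 p.2 = m0) := by
      intro p hpne h
      rw [hm0def] at h
      have h0 := DFunLike.congr_fun h (0 : Fin 4)
      have h3 := DFunLike.congr_fun h (3 : Fin 4)
      simp [Finsupp.single_apply] at h0 h3
      exact hpne (Prod.ext (by omega) h3)
    rw [Finset.sum_eq_single_of_mem p0 hp0 (fun p _ hpne => if_neg (hinj p hpne)),
      if_pos hm0def.symm] at hz
    exact one_ne_zero hz
end

section
/- The ring ℤ[b₂,b₃,b₄,b₈]/(4b₈ + b₄² − b₂b₃²) is an integral domain. -/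
open MvPolynomial

private noncomputable def jFe : MvPolynomial (Fin 4) ℤ ≃ₐ[ℤ] Polynomial (MvPolynomial (Fin 3) ℤ) :=
  (renameEquiv ℤ (Equiv.swap (0:Fin 4) 3)).trans (MvPolynomial.finSuccEquiv ℤ 3)

private lemma jFe_apply : jFe (4 * X 3 + (X 2) ^ 2 - X 0 * (X 1) ^ 2) =
    Polynomial.C (4 : MvPolynomial (Fin 3) ℤ) * Polynomial.X
      + Polynomial.C ((X 1) ^ 2 - X 2 * (X 0) ^ 2) := by
  have s0 : Equiv.swap (0:Fin 4) 3 0 = 3 := by decide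
  have s1 : Equiv.swap (0:Fin 4) 3 1 = 1 := by decide
  have s2 : Equiv.swap (0:Fin 4) 3 2 = 2 := by decide
  have s3 : Equiv.swap (0:Fin 4) 3 3 = 0 := by decide
  have h0 : jFe (X 0) = Polynomial.C (X 2) := by
    simp only [jFe, AlgEquiv.trans_apply, renameEquiv_apply, rename_X, s0]
    rw [show (X (3:Fin 4) : MvPolynomial (Fin 4) ℤ) = X (Fin.succ 2) from rfl,
      MvPolynomial.finSuccEquiv_X_succ]
  have h1 : jFe (X 1) = Polynomial.C (X 0) := by
    simp only [jFe, AlgEquiv.trans_apply, renameEquiv_apply, rename_X, s1]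
    rw [show (X (1:Fin 4) : MvPolynomial (Fin 4) ℤ) = X (Fin.succ 0) from rfl,
      MvPolynomial.finSuccEquiv_X_succ]
  have h2 : jFe (X 2) = Polynomial.C (X 1) := by
    simp only [jFe, AlgEquiv.trans_apply, renameEquiv_apply, rename_X, s2]
    rw [show (X (2:Fin 4) : MvPolynomial (Fin 4) ℤ) = X (Fin.succ 1) from rfl,
      MvPolynomial.finSuccEquiv_X_succ]
  have h3 : jFe (X 3) = Polynomial.X := by
    simp only [jFe, AlgEquiv.trans_apply, renameEquiv_apply, rename_X, s3]
    exact MvPolynomial.finSuccEquiv_X_zero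
  rw [map_sub, map_add, map_mul, map_mul, map_pow, map_pow, h0, h1, h2, h3]
  rw [map_sub, map_mul, map_pow, map_pow]
  ring_nf
  simp [map_ofNat]
  ring

private lemma jF_prime_two : Prime (2 : MvPolynomial (Fin 3) ℤ) := by
  have : Prime (C (2:ℤ) : MvPolynomial (Fin 3) ℤ) := (MvPolynomial.prime_C_iff (Fin 3)).mpr Int.prime_two
  simpa using this

private lemma jF_primitive :
    (Polynomial.C (4 : MvPolynomial (Fin 3) ℤ) * Polynomial.X
      + Polynomial.C ((X 1) ^ 2 - X 2 * (X 0) ^ 2)).IsPrimitive := by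
  intro r hr
  have h1 : r ∣ (4 : MvPolynomial (Fin 3) ℤ) := by
    have := (Polynomial.C_dvd_iff_dvd_coeff r _).mp hr 1
    simpa only [Polynomial.coeff_add, Polynomial.coeff_C_mul, Polynomial.coeff_X_one, mul_one,
      Polynomial.coeff_C, if_neg one_ne_zero, add_zero] using this
  have h0 : r ∣ ((X 1) ^ 2 - X 2 * (X 0) ^ 2 : MvPolynomial (Fin 3) ℤ) := by
    have := (Polynomial.C_dvd_iff_dvd_coeff r _).mp hr 0
    simpa only [Polynomial.coeff_add, Polynomial.coeff_C_mul, Polynomial.coeff_X_zero, mul_zero,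
      Polynomial.coeff_C_zero, zero_add] using this
  have h4 : r ∣ (2 : MvPolynomial (Fin 3) ℤ) ^ 2 := by
    rw [show ((2:MvPolynomial (Fin 3) ℤ))^2 = 4 by norm_num]; exact h1
  rcases (dvd_prime_pow jF_prime_two 2).mp h4 with ⟨i, hi, ha⟩
  match i, hi with
  | 0, _ => exact ha.symm.isUnit (by rw [pow_zero]; exact isUnit_one)
  | 1, _ =>
    exfalso
    have h2r : (2 : MvPolynomial (Fin 3) ℤ) ∣ r := by simpa using ha.symm.dvd
    have : (2 : MvPolynomial (Fin 3) ℤ) ∣ (X 1) ^ 2 - X 2 * (X 0) ^ 2 := h2r.trans h0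
    have := map_dvd (MvPolynomial.eval (![0,1,0] : Fin 3 → ℤ)) this
    simp at this
  | 2, _ =>
    exfalso
    have h2r : (2 : MvPolynomial (Fin 3) ℤ) ∣ r := (dvd_pow_self 2 two_ne_zero).trans ha.symm.dvd
    have : (2 : MvPolynomial (Fin 3) ℤ) ∣ (X 1) ^ 2 - X 2 * (X 0) ^ 2 := h2r.trans h0
    have := map_dvd (MvPolynomial.eval (![0,1,0] : Fin 3 → ℤ)) this
    simp at this

private lemma jF_irreducible :
    Irreducible (Polynomial.C (4 : MvPolynomial (Fin 3) ℤ) * Polynomial.X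
      + Polynomial.C ((X 1) ^ 2 - X 2 * (X 0) ^ 2)) := by
  set K := FractionRing (MvPolynomial (Fin 3) ℤ)
  apply jF_primitive.irreducible_of_irreducible_map_of_injective
    (IsFractionRing.injective (MvPolynomial (Fin 3) ℤ) K)
  rw [Polynomial.map_add, Polynomial.map_mul, Polynomial.map_C, Polynomial.map_C,
    Polynomial.map_X]
  apply Polynomial.irreducible_of_degree_eq_one
  apply Polynomial.degree_linear
  rw [Ne, map_eq_zero_iff _ (IsFractionRing.injective (MvPolynomial (Fin 3) ℤ) K)]
  intro h
  have := map_dvd (MvPolynomial.eval (![0,1,0] : Fin 3 → ℤ)) (dvd_of_eq h.symm)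
  simp at this

theorem jF_isDomain : IsDomain jF := by
  have hp : Prime (4 * X 3 + (X 2) ^ 2 - X 0 * (X 1) ^ 2 : MvPolynomial (Fin 4) ℤ) := by
    rw [← MulEquiv.prime_iff jFe.toRingEquiv.toMulEquiv]
    show Prime (jFe _)
    rw [jFe_apply]
    exact UniqueFactorizationMonoid.irreducible_iff_prime.mp jF_irreducible
  have hI : jFIdeal.IsPrime := by
    unfold jFIdeal
    exact (Ideal.span_singleton_prime hp.ne_zero).mpr hp
  exact @Ideal.Quotient.isDomain _ _ jFIdeal _ hI
end

section
/- In the ring jF = ℤ[b₂,b₃,b₄,b₈]/(4b₈ + b₄² − b₂b₃²), the element b₂b₄ + n·b₂³ lies in the subring generated by 2b₂, b₃, b₄, b₂², b₂b₃, b₂b₄, b₈ if and only if n is even. -/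
open MvPolynomial

/-!
Send `b₂ ↦ t` and `b₃, b₄, b₈ ↦ 0` in `𝔽₂[t]`; the relation holds there. Since `2 = 0` in `𝔽₂`,
every generator of `S` lands in `𝔽₂[t²]`, whereas `b₂b₄ + n b₂³ ↦ n t³`. So membership forces
`n ≡ 0 mod 2`; conversely `2m b₂³ = m · (2b₂) · b₂²`.
-/

section Lift

variable {R : Type*} [CommRing R] (v : Fin 4 → R) (hv : 4 * v 3 + v 2 ^ 2 - v 0 * v 1 ^ 2 = 0)

noncomputable def jFLift : jF →+* R :=
  Ideal.Quotient.lift jFIdeal (aeval v).toRingHom fun a ha => by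
    obtain ⟨c, rfl⟩ := Ideal.mem_span_singleton'.mp ha
    simp [hv]

lemma jFLift_mk_X (i : Fin 4) : jFLift v hv (Ideal.Quotient.mk jFIdeal (X i)) = v i := by
  simp [jFLift]

end Lift

lemma Polynomial.coeff_eq_zero_of_mem_range_expand {R : Type*} [CommSemiring R] {q k : ℕ}
    {p : Polynomial R} (hp : p ∈ (Polynomial.expand R q).range) (hk : ¬ q ∣ k) :
    p.coeff k = 0 := by
  obtain ⟨g, rfl⟩ := hp
  rcases q.eq_zero_or_pos with rfl | hq
  · simp_all [Polynomial.coeff_C]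
  · simp [Polynomial.coeff_expand hq, hk]

noncomputable def jFModTwo : jF →+* Polynomial (ZMod 2) :=
  jFLift ![Polynomial.X, 0, 0, 0] (by simp)

lemma jFModTwo_b2 : jFModTwo b2 = Polynomial.X := jFLift_mk_X _ _ 0
lemma jFModTwo_b3 : jFModTwo b3 = 0 := jFLift_mk_X _ _ 1
lemma jFModTwo_b4 : jFModTwo b4 = 0 := jFLift_mk_X _ _ 2
lemma jFModTwo_b8 : jFModTwo b8 = 0 := jFLift_mk_X _ _ 3

lemma S_le_comap_jFModTwo :
    S ≤ (Polynomial.expand (ZMod 2) 2).range.toSubring.comap jFModTwo := by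
  have hX2 : Polynomial.X ^ 2 ∈ (Polynomial.expand (ZMod 2) 2).range.toSubring :=
    (AlgHom.mem_range _).mpr ⟨Polynomial.X, Polynomial.expand_X 2⟩
  rw [S, Subring.closure_le]
  rintro x (rfl | rfl | rfl | rfl | rfl | rfl | rfl) <;>
    simp only [SetLike.mem_coe, Subring.mem_comap, map_mul, map_pow, map_ofNat, jFModTwo_b2,
      jFModTwo_b3, jFModTwo_b4, jFModTwo_b8, CharTwo.two_eq_zero, zero_mul, mul_zero] <;>
    first | exact zero_mem _ | exact hX2

lemma jFModTwo_b2_mul_b4_add_mul_b2_pow_three (n : ℤ) :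
    jFModTwo (b2 * b4 + (n : jF) * b2 ^ 3) = Polynomial.C (n : ZMod 2) * Polynomial.X ^ 3 := by
  simp [jFModTwo_b2, jFModTwo_b4]

/-- In `jF`, the element `b₂b₄ + n·b₂³` lies in the subring `S` generated by
`2b₂, b₃, b₄, b₂², b₂b₃, b₂b₄, b₈` if and only if `n` is even. -/
theorem stmt11 : ∀ n : ℤ, (b2 * b4 + (n : jF) * b2 ^ 3 ∈ S) ↔ 2 ∣ n := by
  intro n
  constructor
  · intro h
    have hcoeff := Polynomial.coeff_eq_zero_of_mem_range_expand (S_le_comap_jFModTwo h)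
      (show ¬ 2 ∣ 3 by norm_num)
    rwa [jFModTwo_b2_mul_b4_add_mul_b2_pow_three, Polynomial.coeff_C_mul_X_pow, if_pos rfl,
      ZMod.intCast_zmod_eq_zero_iff_dvd] at hcoeff
  · rintro ⟨m, rfl⟩
    have hgen : ∀ {x : jF}, x ∈ ({2 * b2, b3, b4, b2 ^ 2, b2 * b3, b2 * b4, b8} : Set jF) → x ∈ S :=
      fun hx => Subring.subset_closure hx
    have hfactor : ((2 * m : ℤ) : jF) * b2 ^ 3 = m * (2 * b2 * b2 ^ 2) := by
      push_cast
      ring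
    rw [hfactor]
    exact S.add_mem (hgen (by simp)) (S.mul_mem (intCast_mem S m)
      (S.mul_mem (hgen (by simp)) (hgen (by simp))))
end

section
/- In the ring MW_* := ℤ[ρ₁, ρ₃, ρ₄, ρ₅, …] with the additive map d¹ defined by d¹(ρ₁) = 2, d¹(ρ_{2n}) = ρ_{2n−1} for n ≥ 2, d¹(ρ_{2n+1}) = 0, extended by the twisted Leibniz rule d¹(xy) = d¹(x)y + x d¹(y) − ρ₁ d¹(x)d¹(y), the composite d¹ ∘ d¹ = 0. -/
/-! Since `d r = 2`, the twisted Leibniz rule gives `d (r * d x) = 2 * d x` whenever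
`d (d x) = 0`, and with this the three terms of `d (d (x * y))` cancel. Hence the kernel of
`d ∘ d` is a subring, and it suffices to check `d ∘ d = 0` on the generators. -/

open MvPolynomial

/-- Truncation `ℤ[ρ₁, ρ₃, ρ₄]` of `MW₋ = ℤ[ρ₁, ρ₃, ρ₄, ρ₅, …]`:
`ρ₁ = X 0`, `ρ₃ = X 1`, `ρ₄ = X 2`. -/
noncomputable abbrev MW : Type := MvPolynomial (Fin 3) ℤ

noncomputable def ρ1 : MW := X 0
noncomputable def ρ3 : MW := X 1
noncomputable def ρ4 : MW := X 2

def IsTwistedDerivation {R : Type*} [CommRing R] (r : R) (d : R →+ R) : Prop :=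
  ∀ x y : R, d (x * y) = d x * y + x * d y - r * d x * d y

namespace IsTwistedDerivation

variable {R : Type*} [CommRing R] {r : R} {d : R →+ R}

theorem map_one (hd : IsTwistedDerivation r d) (hr : d r = 2) : d 1 = 0 := by
  have h11 := hd 1 1
  have hr1 := hd r 1
  simp only [mul_one, one_mul, hr] at h11 hr1
  have hr1 : r * d 1 = 0 := by linear_combination hr1
  rw [show d 1 = r * d 1 * d 1 by linear_combination -h11, hr1, zero_mul]

theorem map_intCast (hd : IsTwistedDerivation r d) (hr : d r = 2) (n : ℤ) : d n = 0 := by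
  rw [← zsmul_one, map_zsmul, hd.map_one hr, smul_zero]

theorem map_map_mul (hd : IsTwistedDerivation r d) (hr : d r = 2) {x y : R}
    (hx : d (d x) = 0) (hy : d (d y) = 0) : d (d (x * y)) = 0 := by
  have hrdx : d (r * d x) = 2 * d x := by rw [hd, hr, hx]; ring
  rw [hd x y, map_sub, map_add, mul_assoc r, hd (d x) y, hd x (d y), ← mul_assoc r,
    hd (r * d x) (d y), hrdx, hx, hy]
  ring

def kerMapMap (hd : IsTwistedDerivation r d) (hr : d r = 2) : Subring R where
  carrier := {x | d (d x) = 0}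
  zero_mem' := by simp
  one_mem' := by simp [hd.map_one hr]
  add_mem' {x y} hx hy := by simp_all
  neg_mem' {x} hx := by simp_all
  mul_mem' := hd.map_map_mul hr

theorem map_map_eq_zero_of_closure_eq_top (hd : IsTwistedDerivation r d) (hr : d r = 2)
    {s : Set R} (hs : Subring.closure s = ⊤) (hgen : ∀ x ∈ s, d (d x) = 0) (x : R) :
    d (d x) = 0 := by
  have hle : Subring.closure s ≤ hd.kerMapMap hr := Subring.closure_le.2 hgen
  exact hle (hs ▸ Subring.mem_top x)

end IsTwistedDerivation

theorem MvPolynomial.closure_range_X_eq_top {σ : Type*} :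
    Subring.closure (Set.range (X : σ → MvPolynomial σ ℤ)) = ⊤ := by
  rw [eq_top_iff]
  rintro p -
  induction p using MvPolynomial.induction_on with
  | C a => exact eq_intCast C a ▸ intCast_mem _ a
  | add p q hp hq => exact add_mem hp hq
  | mul_X p i hp => exact mul_mem hp (Subring.subset_closure ⟨i, rfl⟩)

/-- The first Bockstein differential `d¹` on `MW₋`, an additive map with `d¹(ρ₁) = 2`,
`d¹(ρ₃) = 0`, `d¹(ρ₄) = ρ₃`, satisfying the twisted Leibniz rule
`d¹(xy) = d¹(x)y + x d¹(y) − ρ₁ d¹(x) d¹(y)`, squares to zero: `d¹ ∘ d¹ = 0`. -/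
theorem stmt16 (d : MW →+ MW)
    (hρ1 : d ρ1 = 2) (hρ3 : d ρ3 = 0) (hρ4 : d ρ4 = ρ3)
    (hLeib : ∀ x y : MW, d (x * y) = d x * y + x * d y - ρ1 * d x * d y) :
    ∀ x : MW, d (d x) = 0 := by
  have hd : IsTwistedDerivation ρ1 d := hLeib
  refine hd.map_map_eq_zero_of_closure_eq_top hρ1 closure_range_X_eq_top ?_
  rintro _ ⟨i, rfl⟩
  fin_cases i
  · show d (d ρ1) = 0
    rw [hρ1, ← Int.cast_ofNat, hd.map_intCast hρ1]
  · show d (d ρ3) = 0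
    rw [hρ3, map_zero]
  · show d (d ρ4) = 0
    rw [hρ4, hρ3]
end

section
/- For a compact complex surface with c₁ = 0 (e.g. a K3 surface with c₂ = 24), the degree-4 elliptic genus formula jac(M) = (c₂/12)·b₂ gives jac(K3) = 2b₂; in particular, in the ring ℤ[b₂,b₃,b₄,b₈]/(4b₈+b₄²−b₂b₃²), the element 2b₂ is in the image subring generated by 2b₂,b₃,b₄,b₂²,b₂b₃,b₂b₄,b₈ but b₂ itself is not, so the elliptic genus of a K3 surface is divisible by 2 in jF while its half is not a genus of any SU-manifold. -/
open MvPolynomial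

/-!
To see that `b₂ ∉ S`, send `b₂ ↦ ε` and `b₃, b₄, b₈ ↦ 0` in the dual numbers `𝔽₂[ε]/(ε²)`.
The defining relation `4b₈ + b₄² - b₂b₃²` goes to `0`, and so does every generator of `S`
(`2ε = 0 = ε²`), so `S` lands in the prime subring `𝔽₂`, which does not contain `ε`.
-/

theorem Subring.closure_le_comap_bot {R A : Type*} [Ring R] [Ring A] (f : R →+* A) {s : Set R}
    (hs : ∀ x ∈ s, f x = 0) : Subring.closure s ≤ (⊥ : Subring A).comap f :=
  Subring.closure_le.mpr fun x hx => by
    rw [SetLike.mem_coe, Subring.mem_comap, hs x hx]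
    exact zero_mem _

theorem DualNumber.eps_notMem_bot {R : Type*} [CommRing R] [Nontrivial R] :
    (DualNumber.eps : DualNumber R) ∉ (⊥ : Subring (DualNumber R)) := by
  rintro ⟨n, hn⟩
  rw [eq_intCast] at hn
  have hsnd := congrArg TrivSqZeroExt.snd hn
  rw [TrivSqZeroExt.snd_intCast, DualNumber.snd_eps] at hsnd
  exact zero_ne_one hsnd

noncomputable def evalEpsAtB2 : MvPolynomial (Fin 4) ℤ →+* DualNumber (ZMod 2) :=
  eval₂Hom (Int.castRingHom _) (Pi.single 0 DualNumber.eps)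

theorem evalEpsAtB2_jFIdeal {p : MvPolynomial (Fin 4) ℤ} (hp : p ∈ jFIdeal) :
    evalEpsAtB2 p = 0 := by
  obtain ⟨q, rfl⟩ := Ideal.mem_span_singleton'.mp hp
  simp [evalEpsAtB2]

noncomputable def jFToDualNumber : jF →+* DualNumber (ZMod 2) :=
  Ideal.Quotient.lift jFIdeal evalEpsAtB2 fun _ => evalEpsAtB2_jFIdeal

@[simp] theorem jFToDualNumber_b2 : jFToDualNumber b2 = DualNumber.eps := by
  simp [jFToDualNumber, b2, evalEpsAtB2]

@[simp] theorem jFToDualNumber_b3 : jFToDualNumber b3 = 0 := by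
  simp [jFToDualNumber, b3, evalEpsAtB2]

@[simp] theorem jFToDualNumber_b4 : jFToDualNumber b4 = 0 := by
  simp [jFToDualNumber, b4, evalEpsAtB2]

@[simp] theorem jFToDualNumber_b8 : jFToDualNumber b8 = 0 := by
  simp [jFToDualNumber, b8, evalEpsAtB2]

theorem S_le_comap_bot : S ≤ (⊥ : Subring (DualNumber (ZMod 2))).comap jFToDualNumber := by
  refine Subring.closure_le_comap_bot _ ?_
  have two_eq_zero : (2 : DualNumber (ZMod 2)) = 0 := by ext <;> decide
  simp [map_ofNat, two_eq_zero]

/-- The elliptic genus of a K3 surface, `jac(K3) = 2b₂`, lies in the image subring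
`S` of the SU-bordism ring, but its half `b₂` does not: so the elliptic genus of K3 is
divisible by 2 in `jF` while its half is not the genus of any SU-manifold. -/
theorem stmt18 : 2 * b2 ∈ S ∧ b2 ∉ S := by
  refine ⟨Subring.subset_closure (by simp), fun hb2 => ?_⟩
  have hbot := S_le_comap_bot hb2
  rw [Subring.mem_comap, jFToDualNumber_b2] at hbot
  exact DualNumber.eps_notMem_bot hbot
end
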